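/- Lemma 1, weighted tropical form: let A be a weighted automaton over the tropical semiring given by a finite state set σ, a finite set E of transitions (j, b, w, j') with j, j' ∈ σ, b ∈ Σ, w ∈ ℝ₊, an initial-weight function λ : σ → [0, ∞], and a final-weight function ρ : σ → [0, ∞]; for y ∈ Σ*, A(y) is the infimum over all paths π in A labeled y from a state p to a state q of λ(p) + w[π] + ρ(q), where w[π] is the sum of the transition weights of π. Let x = x₁⋯xₙ ∈ Σ*, and define the product graph U with vertex set {0, …, n} × σ and weighted edges: from (i, j) to (i+1, j) of weight c(x_{i+1}, ε) for each i < n and j ∈ σ; from (i, j) to (i, j') of weight c(ε, b) + w for each transition (j, b, w, j') ∈ E; and from (i, j) to (i+1, j') of weight c(x_{i+1}, b) + w for each i < n and each transition (j, b, w, j') ∈ E. Then the infimum, over all directed walks in U from some (0, j₀) to some (n, j_f), of λ(j₀) plus the sum of edge weights along the walk plus ρ(j_f), equals d(x, A) = inf_{y ∈ Σ*} (A(y) + d(x, y)) (both sides taken in [0, ∞]). -/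

import Mathlib

/-!
Both sides are shortest-distance problems. After eliminating `y`, the right-hand side minimizes
jointly over an alignment of `x` with some string and a path of `A` spelling that string; write
`d(x.drop i, A_j)` for the version that aligns the suffix `x.drop i` and starts the path in `j`.
Each edge of the product graph consumes exactly one edit operation, together with one transition
of `A` for insertions and substitutions. So `d(x.drop i, A_j)` is at most the weight of any edge
out of `(i, j)` plus `d` at its target, and induction on walks bounds it by the shortest distance
from `(i, j)` to the last layer; conversely, peeling edit operations off an alignment yields a walk
of no larger weight.
-/

open scoped ENNReal NNReal

/-- An edit operation over alphabet `α`: a pair in `(Σ ∪ {ε}) × (Σ ∪ {ε})`,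
where `none` plays the role of `ε`.  The pair `(none, none)` is excluded
from `Ω` via the validity condition in `IsAlignment`. -/
abbrev EditOp (α : Type*) := Option α × Option α

/-- `ω` is an alignment between `x` and `y`: every letter of `ω` lies in
`Ω = (Σ ∪ {ε}) × (Σ ∪ {ε}) − {(ε,ε)}`, and the natural morphism `h`
(erasing `ε`'s componentwise) sends `ω` to `(x, y)`. -/
def IsAlignment {α : Type*} (ω : List (EditOp α)) (x y : List α) : Prop :=
  (∀ p ∈ ω, p ≠ (none, none)) ∧
    ω.filterMap Prod.fst = x ∧ ω.filterMap Prod.snd = y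

/-- The cost `c(ω) = Σᵢ c(ωᵢ)` of an alignment. -/
def alignCost {α : Type*} (c : EditOp α → ℝ≥0) (ω : List (EditOp α)) : ℝ≥0 :=
  (ω.map c).sum

/-- The edit-distance `d(x, y)`: the minimal cost of an alignment between
`x` and `y`. -/
noncomputable def editDist {α : Type*} (c : EditOp α → ℝ≥0) (x y : List α) : ℝ≥0 :=
  sInf {r : ℝ≥0 | ∃ ω : List (EditOp α), IsAlignment ω x y ∧ alignCost c ω = r}

/-- The weight of the walk `u, v₀, v₁, …` : the sum of the weights of its
consecutive edges (an empty walk has weight `0`). -/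
noncomputable def walkWeight {V : Type*} (w : V → V → ℝ≥0∞) : V → List V → ℝ≥0∞
  | _, [] => 0
  | u, v :: vs => w u v + walkWeight w v vs

/-- A weighted automaton over the tropical semiring: a set `E` of transitions
`(j, b, w, j')`, an initial-weight function `λ` and a final-weight function
`ρ` (taking values in `[0, ∞]`). -/
structure WFA (α σ : Type*) where
  /-- The set of transitions `(source, label, weight, destination)`. -/
  trans : Set (σ × α × ℝ≥0 × σ)
  /-- The initial weight function `λ`. -/
  initW : σ → ℝ≥0∞
  /-- The final weight function `ρ`. -/
  finalW : σ → ℝ≥0∞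

/-- `IsPath E p es q`: the list of transitions `es` forms a path of the
automaton from state `p` to state `q`. -/
def IsPath {α σ : Type*} (E : Set (σ × α × ℝ≥0 × σ)) :
    σ → List (σ × α × ℝ≥0 × σ) → σ → Prop
  | p, [], q => p = q
  | p, e :: es, q => e ∈ E ∧ e.1 = p ∧ IsPath E e.2.2.2 es q

/-- The label of a path: the concatenation of its transition labels. -/
def pathLabel {α σ : Type*} (es : List (σ × α × ℝ≥0 × σ)) : List α :=
  es.map (fun e => e.2.1)

/-- The weight `w[π]` of a path: the sum of its transition weights. -/
noncomputable def pathWeight {α σ : Type*} (es : List (σ × α × ℝ≥0 × σ)) : ℝ≥0∞ :=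
  (es.map (fun e => (e.2.2.1 : ℝ≥0∞))).sum

/-- The weight `A(y)` associated by the weighted automaton `A` to a string
`y`: the infimum over all paths `π` labeled `y` from a state `p` to a state
`q` of `λ(p) + w[π] + ρ(q)`. -/
noncomputable def WFA.val {α σ : Type*} (A : WFA α σ) (y : List α) : ℝ≥0∞ :=
  ⨅ (p : σ) (q : σ) (es : List (σ × α × ℝ≥0 × σ))
    (_ : IsPath A.trans p es q ∧ pathLabel es = y),
    A.initW p + pathWeight es + A.finalW q

/-- Edge weights of the product graph `U` of the string `x` and the weighted
automaton `A`: from `(i, j)` to `(i+1, j)` a deletion edge of weight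
`c(x_{i+1}, ε)`; from `(i, j)` to `(i, j')` an insertion edge of weight
`c(ε, b) + w` for each transition `(j, b, w, j') ∈ E`; and from `(i, j)` to
`(i+1, j')` a substitution/match edge of weight `c(x_{i+1}, b) + w` for each
such transition.  Parallel edges are merged by taking the infimum of their
weights; absence of any edge gives weight `∞`. -/
noncomputable def wfaEdgeWeight {α σ : Type*} (A : WFA α σ)
    (c : EditOp α → ℝ≥0) (x : List α) (p q : ℕ × σ) : ℝ≥0∞ :=
  sInf
    ({t | ∃ hi : p.1 < x.length, q.1 = p.1 + 1 ∧ q.2 = p.2 ∧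
        t = (c (some (x.get ⟨p.1, hi⟩), none) : ℝ≥0∞)} ∪
     {t | ∃ e ∈ A.trans, e.1 = p.2 ∧ q.1 = p.1 ∧ q.2 = e.2.2.2 ∧
        t = (c (none, some e.2.1) : ℝ≥0∞) + (e.2.2.1 : ℝ≥0∞)} ∪
     {t | ∃ e ∈ A.trans, ∃ hi : p.1 < x.length, e.1 = p.2 ∧ q.1 = p.1 + 1 ∧
        q.2 = e.2.2.2 ∧
        t = (c (some (x.get ⟨p.1, hi⟩), some e.2.1) : ℝ≥0∞) + (e.2.2.1 : ℝ≥0∞)})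

theorem List.exists_getElem_of_drop_eq_cons {α : Type*} {l s : List α} {i : ℕ} {a : α}
    (h : l.drop i = a :: s) : ∃ hi : i < l.length, l[i] = a ∧ l.drop (i + 1) = s := by
  have hi : i < l.length := by
    by_contra! hle
    simp [List.drop_eq_nil_of_le hle] at h
  rw [List.drop_eq_getElem_cons hi, List.cons.injEq] at h
  exact ⟨hi, h⟩

section Alignment

variable {α : Type*}

theorem alignCost_cons (c : EditOp α → ℝ≥0) (p : EditOp α) (ω : List (EditOp α)) :
    alignCost c (p :: ω) = c p + alignCost c ω := by
  simp [alignCost]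

theorem isAlignment_nil_iff {s t : List α} : IsAlignment [] s t ↔ s = [] ∧ t = [] := by
  simp [IsAlignment, eq_comm]

theorem isAlignment_cons_iff {p : EditOp α} {ω : List (EditOp α)} {s t : List α} :
    IsAlignment (p :: ω) s t ↔ p ≠ (none, none) ∧
      ∃ s' t', s = p.1.toList ++ s' ∧ t = p.2.toList ++ t' ∧ IsAlignment ω s' t' := by
  obtain ⟨_ | a, _ | b⟩ := p <;> simp [IsAlignment, eq_comm] <;> tauto

theorem isAlignment_map_append (x y : List α) :
    IsAlignment ((x.map fun a => (some a, none)) ++ (y.map fun b => (none, some b))) x y := by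
  refine ⟨?_, ?_, ?_⟩ <;> simp [List.filterMap_append, List.filterMap_map]
  rintro _ _ (⟨_, _, rfl, rfl⟩ | ⟨_, _, rfl, rfl⟩) <;> simp

theorem editDist_le_alignCost (c : EditOp α → ℝ≥0) {x y : List α} {ω : List (EditOp α)}
    (hω : IsAlignment ω x y) : editDist c x y ≤ alignCost c ω :=
  csInf_le (OrderBot.bddBelow _) ⟨ω, hω, rfl⟩

theorem coe_editDist_eq_iInf (c : EditOp α → ℝ≥0) (x y : List α) :
    (editDist c x y : ℝ≥0∞) = ⨅ (ω) (_ : IsAlignment ω x y), (alignCost c ω : ℝ≥0∞) := by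
  rw [editDist, ENNReal.coe_sInf (by exact ⟨_, _, isAlignment_map_append x y, rfl⟩), iInf_subtype']
  refine le_antisymm (le_iInf₂ fun ω hω => ?_) (le_iInf fun ⟨r, ω, hω, hr⟩ => ?_)
  · exact iInf_le_of_le ⟨_, ω, hω, rfl⟩ le_rfl
  · exact hr ▸ iInf₂_le ω hω

end Alignment

section Path

variable {α σ : Type*}

theorem pathLabel_append (es es' : List (σ × α × ℝ≥0 × σ)) :
    pathLabel (es ++ es') = pathLabel es ++ pathLabel es' :=
  List.map_append ..

theorem pathWeight_cons (e : σ × α × ℝ≥0 × σ) (es : List (σ × α × ℝ≥0 × σ)) :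
    pathWeight (e :: es) = e.2.2.1 + pathWeight es := by
  simp [pathWeight]

theorem pathWeight_append (es es' : List (σ × α × ℝ≥0 × σ)) :
    pathWeight (es ++ es') = pathWeight es + pathWeight es' := by
  simp [pathWeight]

theorem IsPath.append {E : Set (σ × α × ℝ≥0 × σ)} {p q r : σ} {es es' : List (σ × α × ℝ≥0 × σ)}
    (h : IsPath E p es q) (h' : IsPath E q es' r) : IsPath E p (es ++ es') r := by
  induction es generalizing p with
  | nil => exact (h : p = q) ▸ h'
  | cons e es ih => exact ⟨h.1, h.2.1, ih h.2.2⟩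

theorem IsPath.exists_cons_of_pathLabel_eq_cons {E : Set (σ × α × ℝ≥0 × σ)} {j q : σ}
    {es : List (σ × α × ℝ≥0 × σ)} {b : α} {t : List α} (h : IsPath E j es q)
    (hl : pathLabel es = b :: t) :
    ∃ e es', es = e :: es' ∧ e ∈ E ∧ e.1 = j ∧ e.2.1 = b ∧ pathLabel es' = t ∧
      IsPath E e.2.2.2 es' q := by
  obtain _ | ⟨e, es'⟩ := es
  · simp [pathLabel] at hl
  obtain ⟨hb, ht⟩ := List.cons.inj hl
  exact ⟨e, es', rfl, h.1, h.2.1, hb, ht, h.2.2⟩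

end Path

namespace WFA

variable {α σ : Type*} (A : WFA α σ) (c : EditOp α → ℝ≥0)

/-- `d(s, A_j)`, where `A_j` is `A` with initial weight `0` at `j` and `∞` elsewhere. -/
noncomputable def editDistFrom (s : List α) (j : σ) : ℝ≥0∞ :=
  ⨅ (ω : List (EditOp α)) (es : List (σ × α × ℝ≥0 × σ)) (q : σ)
    (_ : IsAlignment ω s (pathLabel es) ∧ IsPath A.trans j es q),
    (alignCost c ω : ℝ≥0∞) + pathWeight es + A.finalW q

theorem editDistFrom_nil_le (j : σ) : A.editDistFrom c [] j ≤ A.finalW j :=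
  iInf₂_le_of_le [] [] <| iInf₂_le_of_le j ⟨isAlignment_nil_iff.2 ⟨rfl, rfl⟩, rfl⟩ <| by
    simp [alignCost, pathWeight]

theorem editDistFrom_le_cons {p : EditOp α} (hp : p ≠ (none, none))
    {es₀ : List (σ × α × ℝ≥0 × σ)} {j j' : σ} (hpath : IsPath A.trans j es₀ j')
    (hlabel : pathLabel es₀ = p.2.toList) (s : List α) :
    A.editDistFrom c (p.1.toList ++ s) j ≤ c p + pathWeight es₀ + A.editDistFrom c s j' := by
  simp only [editDistFrom, ENNReal.add_iInf]
  refine le_iInf fun ω => le_iInf fun es => le_iInf fun q => le_iInf fun ⟨hal, hpath'⟩ => ?_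
  refine iInf₂_le_of_le (p :: ω) (es₀ ++ es) <|
    iInf₂_le_of_le q ⟨?_, hpath.append hpath'⟩ (le_of_eq ?_)
  · exact isAlignment_cons_iff.2 ⟨hp, s, _, rfl, by rw [pathLabel_append, hlabel], hal⟩
  · rw [alignCost_cons, pathWeight_append]
    push_cast
    ring

theorem editDistFrom_cons_le_delete (a : α) (s : List α) (j : σ) :
    A.editDistFrom c (a :: s) j ≤ c (some a, none) + A.editDistFrom c s j := by
  simpa [pathWeight] using
    A.editDistFrom_le_cons c (p := (some a, none)) (by simp) (es₀ := []) (j' := j) rfl rfl s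

theorem editDistFrom_le_insert {e : σ × α × ℝ≥0 × σ} (he : e ∈ A.trans) {j : σ} (hj : e.1 = j)
    (s : List α) :
    A.editDistFrom c s j ≤ c (none, some e.2.1) + e.2.2.1 + A.editDistFrom c s e.2.2.2 := by
  simpa [pathWeight] using
    A.editDistFrom_le_cons c (p := (none, some e.2.1)) (by simp) (es₀ := [e]) ⟨he, hj, rfl⟩ rfl s

theorem editDistFrom_cons_le_subst {e : σ × α × ℝ≥0 × σ} (he : e ∈ A.trans) {j : σ}
    (hj : e.1 = j) (a : α) (s : List α) :
    A.editDistFrom c (a :: s) j ≤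
      c (some a, some e.2.1) + e.2.2.1 + A.editDistFrom c s e.2.2.2 := by
  simpa [pathWeight] using
    A.editDistFrom_le_cons c (p := (some a, some e.2.1)) (by simp) (es₀ := [e]) ⟨he, hj, rfl⟩ rfl s

theorem editDistFrom_drop_le_edge (x : List α) (i : ℕ) (j : σ) (v : ℕ × σ) :
    A.editDistFrom c (x.drop i) j ≤
      wfaEdgeWeight A c x (i, j) v + A.editDistFrom c (x.drop v.1) v.2 := by
  obtain ⟨i', j'⟩ := v
  rw [wfaEdgeWeight, ENNReal.sInf_add]
  refine le_iInf₂ fun t ht => ?_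
  rcases ht with (⟨hi, hi', rfl, rfl⟩ | ⟨e, he, hj, hi', rfl, rfl⟩) | ⟨e, he, hi, hj, hi', rfl, rfl⟩
  all_goals dsimp only at hi' ⊢; subst hi'
  · rw [List.drop_eq_getElem_cons hi]
    exact A.editDistFrom_cons_le_delete c _ _ _
  · exact A.editDistFrom_le_insert c he hj _
  · rw [List.drop_eq_getElem_cons hi]
    exact A.editDistFrom_cons_le_subst c he hj _ _

theorem editDistFrom_drop_le_walkWeight (x : List α) (vs : List (ℕ × σ)) (i : ℕ) (j : σ)
    (hlast : (((i, j) :: vs).getLast (List.cons_ne_nil _ _)).1 = x.length) :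
    A.editDistFrom c (x.drop i) j ≤ walkWeight (wfaEdgeWeight A c x) (i, j) vs +
      A.finalW (((i, j) :: vs).getLast (List.cons_ne_nil _ _)).2 := by
  induction vs generalizing i j with
  | nil =>
    obtain rfl : i = x.length := hlast
    simpa [walkWeight] using A.editDistFrom_nil_le c j
  | cons v vs ih =>
    rw [List.getLast_cons (List.cons_ne_nil _ _)] at hlast ⊢
    calc A.editDistFrom c (x.drop i) j
        ≤ wfaEdgeWeight A c x (i, j) v + A.editDistFrom c (x.drop v.1) v.2 :=
          A.editDistFrom_drop_le_edge c x i j v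
      _ ≤ _ := by
          rw [walkWeight, add_assoc]
          exact add_le_add le_rfl (ih v.1 v.2 hlast)

theorem wfaEdgeWeight_le_delete {x : List α} {i : ℕ} (hi : i < x.length) (j : σ) :
    wfaEdgeWeight A c x (i, j) (i + 1, j) ≤ c (some x[i], none) :=
  sInf_le (Or.inl (Or.inl ⟨hi, rfl, rfl, rfl⟩))

theorem wfaEdgeWeight_le_insert (x : List α) (i : ℕ) {e : σ × α × ℝ≥0 × σ} (he : e ∈ A.trans)
    {j : σ} (hj : e.1 = j) :
    wfaEdgeWeight A c x (i, j) (i, e.2.2.2) ≤ c (none, some e.2.1) + e.2.2.1 :=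
  sInf_le (Or.inl (Or.inr ⟨e, he, hj, rfl, rfl, rfl⟩))

theorem wfaEdgeWeight_le_subst {x : List α} {i : ℕ} (hi : i < x.length) {e : σ × α × ℝ≥0 × σ}
    (he : e ∈ A.trans) {j : σ} (hj : e.1 = j) :
    wfaEdgeWeight A c x (i, j) (i + 1, e.2.2.2) ≤ c (some x[i], some e.2.1) + e.2.2.1 :=
  sInf_le (Or.inr ⟨e, he, hi, hj, rfl, rfl, rfl⟩)

/-- The shortest distance in the product graph from `(i, j)` to the last layer, with the final
weight of the endpoint added. -/
noncomputable def productDist (x : List α) (i : ℕ) (j : σ) : ℝ≥0∞ :=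
  ⨅ (vs : List (ℕ × σ)) (_ : (((i, j) :: vs).getLast (List.cons_ne_nil _ _)).1 = x.length),
    walkWeight (wfaEdgeWeight A c x) (i, j) vs +
      A.finalW (((i, j) :: vs).getLast (List.cons_ne_nil _ _)).2

theorem editDistFrom_drop_le_productDist (x : List α) (i : ℕ) (j : σ) :
    A.editDistFrom c (x.drop i) j ≤ A.productDist c x i j :=
  le_iInf₂ fun vs hlast => A.editDistFrom_drop_le_walkWeight c x vs i j hlast

theorem productDist_length_le (x : List α) (j : σ) :
    A.productDist c x x.length j ≤ A.finalW j :=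
  iInf₂_le_of_le [] rfl (by simp [walkWeight])

theorem productDist_le_of_edge_le {x : List α} {i : ℕ} {j : σ} {v : ℕ × σ} {a b : ℝ≥0∞}
    (hedge : wfaEdgeWeight A c x (i, j) v ≤ a) (hv : A.productDist c x v.1 v.2 ≤ b) :
    A.productDist c x i j ≤ a + b := by
  refine le_trans ?_ (add_le_add hedge hv)
  simp only [productDist, ENNReal.add_iInf]
  refine le_iInf₂ fun vs hvs => iInf₂_le_of_le (v :: vs) ?_ ?_
  · rwa [List.getLast_cons (List.cons_ne_nil _ _)]
  · rw [List.getLast_cons (List.cons_ne_nil _ _), walkWeight, add_assoc]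

theorem productDist_le_of_isAlignment (x : List α) (ω : List (EditOp α))
    (es : List (σ × α × ℝ≥0 × σ)) (i : ℕ) (j q : σ) (hi : i ≤ x.length)
    (hal : IsAlignment ω (x.drop i) (pathLabel es)) (hpath : IsPath A.trans j es q) :
    A.productDist c x i j ≤ alignCost c ω + pathWeight es + A.finalW q := by
  induction ω generalizing es i j with
  | nil =>
    obtain ⟨hx, hes⟩ := isAlignment_nil_iff.1 hal
    obtain rfl : i = x.length := le_antisymm hi (List.drop_eq_nil_iff.1 hx)
    obtain rfl : es = [] := List.map_eq_nil_iff.1 hes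
    obtain rfl : j = q := hpath
    simpa [alignCost, pathWeight] using A.productDist_length_le c x j
  | cons p ω ih =>
    obtain ⟨hp, s, t, hs, ht, hrest⟩ := isAlignment_cons_iff.1 hal
    obtain ⟨_ | a, _ | b⟩ := p
    · exact absurd rfl hp
    · obtain rfl : x.drop i = s := hs
      obtain ⟨e, es, rfl, he, hj, rfl, rfl, hpath⟩ := hpath.exists_cons_of_pathLabel_eq_cons ht
      calc A.productDist c x i j
          ≤ (c (none, some e.2.1) + e.2.2.1) + (alignCost c ω + pathWeight es + A.finalW q) :=
            A.productDist_le_of_edge_le c (A.wfaEdgeWeight_le_insert c x i he hj)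
              (ih es i e.2.2.2 hi hrest hpath)
        _ = _ := by rw [alignCost_cons, pathWeight_cons]; push_cast; ring
    · obtain ⟨hlt, rfl, rfl⟩ := List.exists_getElem_of_drop_eq_cons hs
      obtain rfl : pathLabel es = t := ht
      calc A.productDist c x i j
          ≤ c (some x[i], none) + (alignCost c ω + pathWeight es + A.finalW q) :=
            A.productDist_le_of_edge_le c (A.wfaEdgeWeight_le_delete c hlt j)
              (ih es (i + 1) j hlt hrest hpath)
        _ = _ := by rw [alignCost_cons]; push_cast; ring
    · obtain ⟨hlt, rfl, rfl⟩ := List.exists_getElem_of_drop_eq_cons hs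
      obtain ⟨e, es, rfl, he, hj, rfl, rfl, hpath⟩ := hpath.exists_cons_of_pathLabel_eq_cons ht
      calc A.productDist c x i j
          ≤ (c (some x[i], some e.2.1) + e.2.2.1) +
              (alignCost c ω + pathWeight es + A.finalW q) :=
            A.productDist_le_of_edge_le c (A.wfaEdgeWeight_le_subst c hlt he hj)
              (ih es (i + 1) e.2.2.2 hlt hrest hpath)
        _ = _ := by rw [alignCost_cons, pathWeight_cons]; push_cast; ring

theorem productDist_zero (x : List α) (j : σ) :
    A.productDist c x 0 j = A.editDistFrom c x j := by
  refine le_antisymm ?_ (by simpa using A.editDistFrom_drop_le_productDist c x 0 j)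
  refine le_iInf fun ω => le_iInf fun es => le_iInf fun q => le_iInf fun ⟨hal, hpath⟩ => ?_
  exact A.productDist_le_of_isAlignment c x ω es 0 j q (Nat.zero_le _) (by simpa using hal) hpath

theorem val_pathLabel_le {p q : σ} {es : List (σ × α × ℝ≥0 × σ)} (h : IsPath A.trans p es q) :
    A.val (pathLabel es) ≤ A.initW p + pathWeight es + A.finalW q :=
  iInf₂_le_of_le p q <| iInf₂_le_of_le es ⟨h, rfl⟩ le_rfl

theorem iInf_val_add_editDist (x : List α) :
    ⨅ y, A.val y + editDist c x y = ⨅ j, A.initW j + A.editDistFrom c x j := by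
  refine le_antisymm (le_iInf fun j => ?_) (le_iInf fun y => ?_)
  · simp only [editDistFrom, ENNReal.add_iInf]
    refine le_iInf fun ω => le_iInf fun es => le_iInf fun q => le_iInf fun ⟨hal, hpath⟩ => ?_
    calc ⨅ y, A.val y + editDist c x y
        ≤ A.val (pathLabel es) + editDist c x (pathLabel es) := iInf_le _ _
      _ ≤ (A.initW j + pathWeight es + A.finalW q) + alignCost c ω :=
          add_le_add (A.val_pathLabel_le hpath)
            (ENNReal.coe_le_coe.2 (editDist_le_alignCost c hal))
      _ = _ := by ring
  · simp only [WFA.val, coe_editDist_eq_iInf, ENNReal.iInf_add, ENNReal.add_iInf]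
    refine le_iInf fun ω => le_iInf fun hal => le_iInf fun p => le_iInf fun q =>
      le_iInf fun es => le_iInf fun ⟨hpath, hy⟩ => ?_
    subst hy
    calc ⨅ j, A.initW j + A.editDistFrom c x j
        ≤ A.initW p + (alignCost c ω + pathWeight es + A.finalW q) :=
          iInf_le_of_le p (add_le_add le_rfl
            (iInf₂_le_of_le ω es (iInf₂_le_of_le q ⟨hal, hpath⟩ le_rfl)))
      _ = _ := by ring

end WFA

theorem wfa_product_shortest_eq_editDist_general {α σ : Type*}
    (A : WFA α σ) (c : EditOp α → ℝ≥0) (x : List α) :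
    (⨅ (j₀ : σ) (vs : List (ℕ × σ))
        (_ : (((0, j₀) :: vs).getLast (List.cons_ne_nil _ _)).1 = x.length),
        A.initW j₀ + walkWeight (wfaEdgeWeight A c x) (0, j₀) vs +
          A.finalW ((((0, j₀) :: vs).getLast (List.cons_ne_nil _ _)).2))
    = ⨅ y : List α, (A.val y + (editDist c x y : ℝ≥0∞)) := by
  calc _ = ⨅ j, A.initW j + A.productDist c x 0 j := by
        simp only [WFA.productDist, ENNReal.add_iInf, add_assoc]
    _ = ⨅ j, A.initW j + A.editDistFrom c x j := by simp only [A.productDist_zero]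
    _ = _ := (A.iInf_val_add_editDist c x).symm

/-- Lemma 1, weighted tropical form: the infimum over all
directed walks in the product graph `U` from some `(0, j₀)` to some
`(n, j_f)` of `λ(j₀)` plus the total edge weight plus `ρ(j_f)` equals
`d(x, A) = inf_{y ∈ Σ*} (A(y) + d(x, y))` (both sides in `[0, ∞]`). -/
theorem wfa_product_shortest_eq_editDist {α σ : Type*} [Fintype α] [Fintype σ]
    (A : WFA α σ) (hE : A.trans.Finite) (c : EditOp α → ℝ≥0) (x : List α) :
    (⨅ (j₀ : σ) (vs : List (ℕ × σ))
        (_ : (((0, j₀) :: vs).getLast (List.cons_ne_nil _ _)).1 = x.length),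
        A.initW j₀ + walkWeight (wfaEdgeWeight A c x) (0, j₀) vs +
          A.finalW ((((0, j₀) :: vs).getLast (List.cons_ne_nil _ _)).2))
    = ⨅ y : List α, (A.val y + (editDist c x y : ℝ≥0∞)) :=
  wfa_product_shortest_eq_editDist_general A c x
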